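/- arXiv:0710.1399 — 2 statements merged into one kernel-verified Lean document; each statement's English description precedes it below -/
import Mathlib

section
/- Let μ be a product probability measure on ℝ^m and g : ℝ^m → (0,∞) a bounded measurable coordinatewise nonincreasing function. Then μ stochastically dominates μ_g, where dμ_g = g dμ / ∫ g dμ. -/
/-!
Since `dμ_g / dμ = g / ∫ g dμ`, the claim `∫ f dμ_g ≤ ∫ f dμ` says `∫ f g dμ ≤ ∫ f dμ · ∫ g dμ`,
which is Harris' inequality `∫ f dμ · ∫ h dμ ≤ ∫ f h dμ` for the monotone pair `f`, `h = -g`.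
In one dimension this is Chebyshev's integral inequality: integrate the rearrangement inequality
`F x G y + F y G x ≤ F x G x + F y G y` over `ρ ⊗ ρ`. For a product measure on `Fin (n + 1) → α`,
Fubini along the first coordinate reduces `∫ f h` to the inner integrals over the remaining
coordinates, where the induction hypothesis applies; the averaged functions
`x ↦ ∫ f (x, ·)` and `x ↦ ∫ h (x, ·)` are again monotone, so the one-dimensional case finishes.
-/

open MeasureTheory

lemma Monotone.comp_fin_cons {α β : Type*} [Preorder α] [Preorder β] {n : ℕ}
    {f : (Fin (n + 1) → α) → β} (hf : Monotone f) (x : α) :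
    Monotone fun y : Fin n → α => f (Fin.cons x y) :=
  fun _ _ h => hf (Fin.cons_le_cons.2 ⟨le_rfl, h⟩)

lemma abs_mul_le_mul_of_abs_le {a b C D : ℝ} (ha : |a| ≤ C) (hb : |b| ≤ D) : |a * b| ≤ C * D := by
  rw [abs_mul]
  exact mul_le_mul ha hb (abs_nonneg _) ((abs_nonneg _).trans ha)

section Harris

variable {Ω α : Type*} [MeasurableSpace Ω] [MeasurableSpace α]

lemma Measurable.integrable_of_abs_le {ρ : Measure Ω} [IsFiniteMeasure ρ] {f : Ω → ℝ} {C : ℝ}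
    (hf : Measurable f) (hC : ∀ x, |f x| ≤ C) : Integrable f ρ :=
  .of_bound hf.aestronglyMeasurable C (ae_of_all _ hC)

lemma abs_integral_le_of_abs_le {ρ : Measure Ω} [IsProbabilityMeasure ρ] {f : Ω → ℝ} {C : ℝ}
    (hC : ∀ x, |f x| ≤ C) : |∫ x, f x ∂ρ| ≤ C := by
  simpa using norm_integral_le_of_norm_le_const (μ := ρ) (f := f) (ae_of_all _ hC)

theorem Monovary.integral_mul_integral_le {ρ : Measure Ω} [IsProbabilityMeasure ρ]
    {F G : Ω → ℝ} (hFG : Monovary F G) (hF : Integrable F ρ) (hG : Integrable G ρ)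
    (hFG_int : Integrable (fun x => F x * G x) ρ) :
    (∫ x, F x ∂ρ) * ∫ x, G x ∂ρ ≤ ∫ x, F x * G x ∂ρ := by
  have hcross : Integrable (fun z : Ω × Ω => F z.1 * G z.2 + G z.1 * F z.2) (ρ.prod ρ) :=
    (hF.mul_prod hG).add (hG.mul_prod hF)
  have hdiag : Integrable (fun z : Ω × Ω => F z.1 * G z.1 + F z.2 * G z.2) (ρ.prod ρ) :=
    (hFG_int.comp_fst ρ).add (hFG_int.comp_snd ρ)
  have key := integral_mono hcross hdiag fun z => by
    linarith [hFG.mul_add_mul_le_mul_add_mul z.1 z.2, mul_comm (F z.2) (G z.1)]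
  rw [integral_add (hF.mul_prod hG) (hG.mul_prod hF), integral_prod_mul, integral_prod_mul,
    integral_add (hFG_int.comp_fst ρ) (hFG_int.comp_snd ρ),
    integral_fun_fst (f := fun x => F x * G x), integral_fun_snd (f := fun x => F x * G x)] at key
  simp only [probReal_univ, one_smul] at key
  linarith [mul_comm (∫ x, F x ∂ρ) (∫ x, G x ∂ρ)]

section FinCons

variable {n : ℕ}

lemma measurable_fin_cons_uncurry :
    Measurable fun z : α × (Fin n → α) => (Fin.cons z.1 z.2 : Fin (n + 1) → α) := by
  refine measurable_pi_iff.2 fun j => Fin.cases ?_ (fun i => ?_) j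
  · simpa using measurable_fst
  · simp only [Fin.cons_succ]
    exact (measurable_pi_apply i).comp measurable_snd

lemma measurable_fin_cons (x : α) :
    Measurable fun y : Fin n → α => (Fin.cons x y : Fin (n + 1) → α) :=
  measurable_fin_cons_uncurry.comp measurable_prodMk_left

theorem integral_pi_fin_succ {E : Type*} [NormedAddCommGroup E] [NormedSpace ℝ E]
    (ν : Fin (n + 1) → Measure α) [∀ i, SigmaFinite (ν i)] {φ : (Fin (n + 1) → α) → E}
    (hφ : Integrable φ (Measure.pi ν)) :
    ∫ x, φ x ∂Measure.pi ν = ∫ x, ∫ y, φ (Fin.cons x y) ∂Measure.pi (fun i => ν i.succ) ∂ν 0 := by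
  set e := MeasurableEquiv.piFinSuccAbove (fun _ => α) 0
  have he :
      MeasurePreserving e.symm ((ν 0).prod (Measure.pi fun i => ν i.succ)) (Measure.pi ν) := by
    simpa only [Fin.zero_succAbove] using (measurePreserving_piFinSuccAbove ν 0).symm
  have he_symm : ⇑e.symm = fun z => Fin.cons z.1 z.2 := by
    ext z : 1
    simp [e, MeasurableEquiv.piFinSuccAbove_symm_apply, Fin.insertNthEquiv, Fin.insertNth_zero']
  have hint := (he.integrable_comp_emb e.symm.measurableEmbedding).2 hφ
  rw [he_symm] at hint
  rw [← he.integral_comp', he_symm]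
  exact integral_prod _ hint

lemma measurable_integral_fin_cons (π : Measure (Fin n → α)) [SFinite π]
    {f : (Fin (n + 1) → α) → ℝ} (hf : Measurable f) :
    Measurable fun x => ∫ y, f (Fin.cons x y) ∂π :=
  (hf.comp measurable_fin_cons_uncurry).stronglyMeasurable.integral_prod_right'.measurable

lemma monotone_integral_fin_cons [Preorder α] (π : Measure (Fin n → α)) [IsFiniteMeasure π]
    {f : (Fin (n + 1) → α) → ℝ} {C : ℝ} (hf : Measurable f) (hC : ∀ x, |f x| ≤ C)
    (hf_mono : Monotone f) : Monotone fun x => ∫ y, f (Fin.cons x y) ∂π := fun x x' hx =>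
  integral_mono ((hf.comp (measurable_fin_cons x)).integrable_of_abs_le fun _ => hC _)
    ((hf.comp (measurable_fin_cons x')).integrable_of_abs_le fun _ => hC _)
    fun _ => hf_mono (Fin.cons_le_cons.2 ⟨hx, le_rfl⟩)

end FinCons

theorem integral_mul_integral_le_integral_mul_pi [LinearOrder α] {n : ℕ}
    (ν : Fin n → Measure α) [∀ i, IsProbabilityMeasure (ν i)] {f g : (Fin n → α) → ℝ}
    {Cf Cg : ℝ} (hf : Measurable f) (hg : Measurable g) (hCf : ∀ x, |f x| ≤ Cf)
    (hCg : ∀ x, |g x| ≤ Cg) (hf_mono : Monotone f) (hg_mono : Monotone g) :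
    (∫ x, f x ∂Measure.pi ν) * ∫ x, g x ∂Measure.pi ν ≤ ∫ x, f x * g x ∂Measure.pi ν := by
  induction n with
  | zero => simp [integral_unique]
  | succ n ih =>
    set π := Measure.pi fun i : Fin n => ν i.succ
    set F := fun x => ∫ y, f (Fin.cons x y) ∂π
    set G := fun x => ∫ y, g (Fin.cons x y) ∂π
    have hfg_bdd : ∀ x, |f x * g x| ≤ Cf * Cg := fun x => abs_mul_le_mul_of_abs_le (hCf x) (hCg x)
    have hF_bdd : ∀ x, |F x| ≤ Cf := fun _ => abs_integral_le_of_abs_le fun _ => hCf _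
    have hG_bdd : ∀ x, |G x| ≤ Cg := fun _ => abs_integral_le_of_abs_le fun _ => hCg _
    have hF_meas := measurable_integral_fin_cons π hf
    have hG_meas := measurable_integral_fin_cons π hg
    calc (∫ x, f x ∂Measure.pi ν) * ∫ x, g x ∂Measure.pi ν
        = (∫ x, F x ∂ν 0) * ∫ x, G x ∂ν 0 := by
          rw [integral_pi_fin_succ ν (hf.integrable_of_abs_le hCf),
            integral_pi_fin_succ ν (hg.integrable_of_abs_le hCg)]
      _ ≤ ∫ x, F x * G x ∂ν 0 :=
          ((monotone_integral_fin_cons π hf hCf hf_mono).monovary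
            (monotone_integral_fin_cons π hg hCg hg_mono)).integral_mul_integral_le
            (hF_meas.integrable_of_abs_le hF_bdd) (hG_meas.integrable_of_abs_le hG_bdd)
            ((hF_meas.mul hG_meas).integrable_of_abs_le fun x =>
              abs_mul_le_mul_of_abs_le (hF_bdd x) (hG_bdd x))
      _ ≤ ∫ x, ∫ y, f (Fin.cons x y) * g (Fin.cons x y) ∂π ∂ν 0 :=
          integral_mono
            ((hF_meas.mul hG_meas).integrable_of_abs_le fun x =>
              abs_mul_le_mul_of_abs_le (hF_bdd x) (hG_bdd x))
            ((measurable_integral_fin_cons π (hf.mul hg)).integrable_of_abs_le fun _ =>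
              abs_integral_le_of_abs_le fun _ => hfg_bdd _)
            fun x => ih _ (hf.comp (measurable_fin_cons x)) (hg.comp (measurable_fin_cons x))
              (fun _ => hCf _) (fun _ => hCg _) (hf_mono.comp_fin_cons x) (hg_mono.comp_fin_cons x)
      _ = ∫ x, f x * g x ∂Measure.pi ν :=
          (integral_pi_fin_succ ν (φ := fun x => f x * g x)
            ((hf.mul hg).integrable_of_abs_le hfg_bdd)).symm

lemma integral_withDensity_ofReal {μ : Measure Ω} {g : Ω → ℝ} (hg : Measurable g)
    (hg_nonneg : ∀ x, 0 ≤ g x) (f : Ω → ℝ) :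
    ∫ x, f x ∂μ.withDensity (fun x => ENNReal.ofReal (g x)) = ∫ x, g x * f x ∂μ := by
  rw [integral_withDensity_eq_integral_toReal_smul hg.ennreal_ofReal
    (ae_of_all _ fun _ => ENNReal.ofReal_lt_top)]
  simp only [ENNReal.toReal_ofReal (hg_nonneg _), smul_eq_mul]

end Harris

theorem stmt_10 (m : ℕ) (μ : Measure (Fin m → ℝ)) [IsProbabilityMeasure μ]
    (hprod : ∃ ν : Fin m → Measure ℝ,
      (∀ i, IsProbabilityMeasure (ν i)) ∧ μ = Measure.pi ν)
    (g : (Fin m → ℝ) → ℝ) (hgmeas : Measurable g)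
    (hgpos : ∀ x, 0 < g x) (hgbd : ∃ C : ℝ, ∀ x, g x ≤ C)
    (hganti : Antitone g)
    (μg : Measure (Fin m → ℝ))
    (hμg : μg = (ENNReal.ofReal (∫ x, g x ∂μ))⁻¹ •
      μ.withDensity (fun x => ENNReal.ofReal (g x))) :
    ∀ f : (Fin m → ℝ) → ℝ, Measurable f → (∃ C : ℝ, ∀ x, |f x| ≤ C) →
      Monotone f → ∫ x, f x ∂μg ≤ ∫ x, f x ∂μ := by
  intro f hf ⟨Cf, hCf⟩ hf_mono
  obtain ⟨ν, hν, hμ⟩ := hprod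
  obtain ⟨Cg, hCg⟩ := hgbd
  have hg_abs : ∀ x, |g x| ≤ Cg := fun x => (abs_of_pos (hgpos x)).trans_le (hCg x)
  have hI : 0 < ∫ x, g x ∂μ := by
    refine (integral_pos_iff_support_of_nonneg (fun x => (hgpos x).le)
      (hgmeas.integrable_of_abs_le hg_abs)).2 ?_
    simp [Function.support, (hgpos _).ne']
  have harris : ∫ x, g x * f x ∂μ ≤ (∫ x, g x ∂μ) * ∫ x, f x ∂μ := by
    subst hμ
    simpa [integral_neg] using integral_mul_integral_le_integral_mul_pi ν hgmeas.neg hf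
      (by simpa using hg_abs) hCf hganti.neg hf_mono
  rw [hμg, integral_smul_measure, integral_withDensity_ofReal hgmeas (fun x => (hgpos x).le),
    ENNReal.toReal_inv, ENNReal.toReal_ofReal hI.le, smul_eq_mul, inv_mul_le_iff₀ hI]
  exact harris
end

section
/- Let ρ be an even probability measure on ℝ with ρ({0}) = 0, variance 1, and finite moment generating function. Define the tilted measure ρ[γ] by dρ[γ](x) = e^{γx} dρ(x)/∫ e^{γx'}dρ(x'). Then r_N := ∫_0^∞ (1 − e^{−4βx/√N})(1 − e^{−2βx/√N}) dρ[6β/√N](x) satisfies N · r_N → 4β² as N → ∞, for any fixed β > 0. -/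
/-!
With `t = √N`, the tilted measure `expTilt ρ (c / t)` has density `e^{cx/t} / Z(c/t)` with
respect to `ρ`, and `Z(c/t) → Z(0) = 1` by continuity of the moment generating function. Each
factor `t (1 - e^{-ax/t})` lies in `[0, ax]` and tends to `ax`, so dominated convergence, with the
majorant `a b x² e^{cx}` (integrable because all exponential moments are finite), gives
`t² ∫_{x>0} (1 - e^{-ax/t}) (1 - e^{-bx/t}) dρ[c/t] → a b ∫_{x>0} x² dρ`. As `ρ` is symmetric
with no atom at `0`, the last integral is half the variance. Take `a = 4β`, `b = 2β`, `c = 6β`.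
-/

open MeasureTheory Filter

/-- The exponential tilt of a measure `ρ` on `ℝ` by parameter `γ`:
`dρ[γ](x) = e^{γx} dρ(x) / ∫ e^{γx'} dρ(x')`. -/
noncomputable def expTilt (ρ : Measure ℝ) (γ : ℝ) : Measure ℝ :=
  (ENNReal.ofReal (∫ x, Real.exp (γ * x) ∂ρ))⁻¹ •
    ρ.withDensity (fun x => ENNReal.ofReal (Real.exp (γ * x)))

open Real Set Topology ProbabilityTheory

lemma setIntegral_expTilt (ρ : Measure ℝ) (γ : ℝ) {s : Set ℝ} (hs : MeasurableSet s)
    (g : ℝ → ℝ) :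
    ∫ x in s, g x ∂expTilt ρ γ =
      (∫ x, exp (γ * x) ∂ρ)⁻¹ * ∫ x in s, exp (γ * x) * g x ∂ρ := by
  have hZ : 0 ≤ ∫ x, exp (γ * x) ∂ρ := integral_nonneg fun x => (exp_pos _).le
  rw [expTilt, Measure.restrict_smul, integral_smul_measure, ENNReal.toReal_inv,
    ENNReal.toReal_ofReal hZ, smul_eq_mul]
  rw [setIntegral_withDensity_eq_setIntegral_toReal_smul (by fun_prop)
    (ae_of_all _ fun _ => ENNReal.ofReal_lt_top) g hs]
  simp only [ENNReal.toReal_ofReal (exp_nonneg _), smul_eq_mul]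

lemma setIntegral_Ioi_eq_half_integral (ρ : Measure ℝ) [ρ.IsNegInvariant]
    (hatom : ρ {0} = 0) {f : ℝ → ℝ} (heven : ∀ x, f (-x) = f x) (hf : Integrable f ρ) :
    ∫ x in Ioi 0, f x ∂ρ = (∫ x, f x ∂ρ) / 2 := by
  have hreflect : ∫ x in Iio 0, f x ∂ρ = ∫ x in Ioi 0, f x ∂ρ := by
    have hind : (fun x => (Ioi 0).indicator f (-x)) = (Iio 0).indicator f := by
      ext x
      simp [indicator_apply, heven]
    rw [← integral_indicator measurableSet_Ioi, ← integral_indicator measurableSet_Iio, ← hind,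
      integral_neg_eq_self]
  have hIic : ρ.restrict (Iic 0) = ρ.restrict (Iio 0) :=
    Measure.restrict_congr_set (Iio_ae_eq_Iic' hatom).symm
  have hsplit := integral_add_compl (measurableSet_Ioi (a := (0 : ℝ))) hf
  rw [compl_Ioi, hIic, hreflect] at hsplit
  linarith

lemma tendsto_mul_one_sub_exp_neg_div (y : ℝ) :
    Tendsto (fun t => t * (1 - exp (-y / t))) atTop (𝓝 y) := by
  have hderiv : HasDerivAt (fun s => 1 - exp (-y * s)) y 0 := by
    simpa using ((hasDerivAt_id (0 : ℝ)).const_mul (-y)).exp.const_sub 1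
  have hslope := (hasDerivAt_iff_tendsto_slope.1 hderiv).comp
    (tendsto_inv_atTop_nhdsGT_zero.mono_right (nhdsWithin_mono _ fun _ h => ne_of_gt h))
  refine hslope.congr fun t => ?_
  simp only [Function.comp_apply, slope_def_field, mul_zero, neg_zero, Real.exp_zero, sub_zero,
    neg_mul, div_eq_mul_inv, inv_inv]
  ring

lemma mul_one_sub_exp_neg_div_mem_Icc {y t : ℝ} (hy : 0 ≤ y) (ht : 0 < t) :
    t * (1 - exp (-y / t)) ∈ Icc 0 y := by
  have hyt : 0 ≤ y / t := div_nonneg hy ht.le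
  rw [neg_div]
  refine ⟨mul_nonneg ht.le (sub_nonneg.2 (exp_le_one_iff.2 (neg_nonpos.2 hyt))), ?_⟩
  calc t * (1 - exp (-(y / t))) ≤ t * (y / t) := by
        gcongr
        linarith [one_sub_le_exp_neg (y / t)]
    _ = y := mul_div_cancel₀ _ ht.ne'

lemma tendsto_setIntegral_Ioi_exp_mul_one_sub_exp_neg (ρ : Measure ℝ)
    (hmgf : ∀ t : ℝ, Integrable (fun x => exp (t * x)) ρ) {a b c : ℝ}
    (ha : 0 ≤ a) (hb : 0 ≤ b) (hc : 0 ≤ c) :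
    Tendsto (fun t : ℝ => ∫ x in Ioi 0,
        exp (c / t * x) * (t * (1 - exp (-(a * x) / t))) * (t * (1 - exp (-(b * x) / t))) ∂ρ)
      atTop (𝓝 (∫ x in Ioi 0, a * b * x ^ 2 ∂ρ)) := by
  have hdom : Integrable (fun x => a * b * (x ^ 2 * exp (c * x))) ρ :=
    (integrable_pow_mul_exp_of_integrable_exp_mul (X := id) one_ne_zero (hmgf _) (hmgf _)
      2).const_mul _
  refine tendsto_integral_filter_of_dominated_convergence _
    (Eventually.of_forall fun t => by fun_prop) ?_ hdom.integrableOn ?_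
  · filter_upwards [eventually_ge_atTop 1] with t ht
    rw [ae_restrict_iff' measurableSet_Ioi]
    refine ae_of_all _ fun x (hx : 0 < x) => ?_
    have ht0 : 0 < t := by linarith
    obtain ⟨hA0, hA⟩ := mul_one_sub_exp_neg_div_mem_Icc (mul_nonneg ha hx.le) ht0
    obtain ⟨hB0, hB⟩ := mul_one_sub_exp_neg_div_mem_Icc (mul_nonneg hb hx.le) ht0
    have hE : exp (c / t * x) ≤ exp (c * x) :=
      exp_le_exp.2 (mul_le_mul_of_nonneg_right (div_le_self hc ht) hx.le)
    rw [norm_of_nonneg (by positivity)]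
    calc _ ≤ exp (c * x) * (a * x) * (b * x) := by gcongr
      _ = _ := by ring
  · refine ae_of_all _ fun x => ?_
    have hval : a * b * x ^ 2 = exp (0 * x) * (a * x * (b * x)) := by
      rw [zero_mul, Real.exp_zero]; ring
    rw [hval]
    exact (((continuous_exp.tendsto _).comp
      ((tendsto_const_nhds (x := c)).div_atTop tendsto_id |>.mul_const x)).mul
        ((tendsto_mul_one_sub_exp_neg_div (a * x)).mul
          (tendsto_mul_one_sub_exp_neg_div (b * x)))).congr fun t => by
      simp only [Function.comp_apply, id, mul_assoc]

lemma tendsto_sq_mul_setIntegral_Ioi_expTilt (ρ : Measure ℝ) [IsProbabilityMeasure ρ]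
    (hmgf : ∀ t : ℝ, Integrable (fun x => exp (t * x)) ρ) {a b c : ℝ}
    (ha : 0 ≤ a) (hb : 0 ≤ b) (hc : 0 ≤ c) :
    Tendsto (fun t : ℝ => t ^ 2 *
        ∫ x in Ioi 0, (1 - exp (-a * x / t)) * (1 - exp (-b * x / t)) ∂expTilt ρ (c / t))
      atTop (𝓝 (a * b * ∫ x in Ioi 0, x ^ 2 ∂ρ)) := by
  have hc0 : Tendsto (fun t : ℝ => c / t) atTop (𝓝 0) :=
    tendsto_const_nhds.div_atTop tendsto_id
  have hZ : Tendsto (fun t : ℝ => ∫ x, exp (c / t * x) ∂ρ) atTop (𝓝 1) := by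
    have h := ((continuous_mgf (X := id) hmgf).tendsto 0).comp hc0
    rwa [mgf_zero] at h
  have key := (hZ.inv₀ one_ne_zero).mul
    (tendsto_setIntegral_Ioi_exp_mul_one_sub_exp_neg ρ hmgf ha hb hc)
  rw [inv_one, one_mul, integral_const_mul] at key
  refine key.congr fun t => ?_
  rw [setIntegral_expTilt _ _ measurableSet_Ioi, mul_left_comm (t ^ 2),
    ← integral_const_mul (t ^ 2)]
  congr 1
  refine integral_congr_ae (ae_of_all _ fun x => ?_)
  simp only [neg_mul]
  ring

theorem stmt_14 (ρ : Measure ℝ) [IsProbabilityMeasure ρ]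
    (heven : ρ.map (fun x => -x) = ρ)
    (hatom : ρ {0} = 0)
    (hvar : ∫ x, x ^ 2 ∂ρ = 1)
    (hmgf : ∀ t : ℝ, Integrable (fun x => Real.exp (t * x)) ρ)
    (β : ℝ) (hβ : 0 < β) :
    Tendsto
      (fun N : ℕ => (N : ℝ) *
        ∫ x in Set.Ioi (0 : ℝ),
          (1 - Real.exp (-4 * β * x / Real.sqrt N)) *
            (1 - Real.exp (-2 * β * x / Real.sqrt N))
          ∂(expTilt ρ (6 * β / Real.sqrt N)))
      atTop (nhds (4 * β ^ 2)) := by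
  have : ρ.IsNegInvariant := ⟨heven⟩
  have hhalf : ∫ x in Ioi 0, x ^ 2 ∂ρ = 1 / 2 := by
    rw [setIntegral_Ioi_eq_half_integral ρ hatom (f := (· ^ 2)) neg_sq
      (integrable_pow_of_integrable_exp_mul (X := id) one_ne_zero (hmgf _) (hmgf _) 2), hvar]
  have hlim := (tendsto_sq_mul_setIntegral_Ioi_expTilt ρ hmgf (a := 4 * β) (b := 2 * β)
    (c := 6 * β) (by positivity) (by positivity) (by positivity)).comp
    (tendsto_sqrt_atTop.comp tendsto_natCast_atTop_atTop)
  rw [hhalf] at hlim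
  convert hlim using 2 with N
  · simp [Real.sq_sqrt (Nat.cast_nonneg N)]
  · ring
end
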